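/- Let G ∈ G* be 2-connected, let C be a longest odd cycle of G with |C| ≥ 5, and let {x₁,x₂} be the common touching set of all vertices outside C. Then every connected component H of G − V(C) is a path whose one endpoint is the unique neighbor of x₁ in H, whose other endpoint is the unique neighbor of x₂ in H, and whose internal vertices have no neighbors outside the path. -/

import Mathlib

open SimpleGraph

/-- Adjacency in the line graph `L(G)`: two distinct edges sharing an endpoint. -/
def lineAdj {V : Type*} (G : SimpleGraph V) (e f : G.edgeSet) : Prop :=
  e ≠ f ∧ ∃ x : V, x ∈ (e : Sym2 V) ∧ x ∈ (f : Sym2 V)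

/-- `D` is an orientation of the (loopless) adjacency relation `Adj`:
every arc of `D` is an edge, and every edge gets at least one of its two arcs. -/
def IsOrientation {α : Type*} (Adj : α → α → Prop) (D : α → α → Prop) : Prop :=
  (∀ a b, D a b → Adj a b) ∧ (∀ a b, Adj a b → D a b ∨ D b a)

/-- A digraph (relation) is kernel-perfect if every induced subdigraph has a kernel:
an independent set `S` such that every vertex outside `S` has an out-neighbor in `S`. -/
def KernelPerfect {α : Type*} (D : α → α → Prop) : Prop :=
  ∀ Z : Set α, ∃ S ⊆ Z, (∀ a ∈ S, ∀ b ∈ S, ¬ D a b) ∧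
    ∀ z ∈ Z, z ∉ S → ∃ s ∈ S, D z s

/-- Out-degree of a vertex in a digraph given as a relation. -/
noncomputable def outDeg {α : Type*} (D : α → α → Prop) (a : α) : ℕ := {b | D a b}.ncard

/-- Degree of a vertex. -/
noncomputable def deg {V : Type*} (G : SimpleGraph V) (v : V) : ℕ := (G.neighborSet v).ncard

/-- Maximum degree. -/
noncomputable def maxDeg {V : Type*} (G : SimpleGraph V) : ℕ := sSup (Set.range (deg G))

/-- `G` is `f`-edge-orientable: `L(G)` admits a kernel-perfect orientation with
`1 + d⁺(e) ≤ f e` for every edge `e`. -/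
def EdgeOrientable {V : Type*} (G : SimpleGraph V) (f : G.edgeSet → ℕ) : Prop :=
  ∃ D : G.edgeSet → G.edgeSet → Prop,
    IsOrientation (lineAdj G) D ∧ KernelPerfect D ∧ ∀ e, outDeg D e + 1 ≤ f e

open Classical in
/-- The function `f_{k,v}`: `deg v` on edges incident to `v`, and `k` elsewhere. -/
noncomputable def fkv {V : Type*} (G : SimpleGraph V) (k : ℕ) (v : V) (e : G.edgeSet) : ℕ :=
  if v ∈ (e : Sym2 V) then deg G v else k

/-- `G` is strongly `k`-edge-orientable. -/
def StronglyEdgeOrientable {V : Type*} (G : SimpleGraph V) (k : ℕ) : Prop :=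
  ∀ v : V, EdgeOrientable G (fkv G k v)

/-- `G` is `f`-edge-choosable. -/
def FEdgeChoosable {V : Type*} (G : SimpleGraph V) (f : G.edgeSet → ℕ) : Prop :=
  ∀ ℓ : G.edgeSet → Finset ℕ, (∀ e, f e ≤ (ℓ e).card) →
    ∃ φ : G.edgeSet → ℕ, (∀ e, φ e ∈ ℓ e) ∧
      ∀ e₁ e₂, lineAdj G e₁ e₂ → φ e₁ ≠ φ e₂

/-- `G ∈ G*`: any two distinct odd cycles share at most one edge. -/
def InGStar {V : Type*} (G : SimpleGraph V) : Prop :=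
  ∀ (u w : V) (c₁ : G.Walk u u) (c₂ : G.Walk w w),
    c₁.IsCycle → c₂.IsCycle → Odd c₁.length → Odd c₂.length →
    {e | e ∈ c₁.edges} ≠ {e | e ∈ c₂.edges} →
    ({e | e ∈ c₁.edges} ∩ {e | e ∈ c₂.edges}).ncard ≤ 1

/-- `G` is 2-connected: connected, and still connected after deleting any one vertex. -/
def TwoConn {V : Type*} (G : SimpleGraph V) : Prop :=
  G.Connected ∧ ∀ v : V, (G.induce {w | w ≠ v}).Connected

/-- A block of `G`: a maximal 2-connected subgraph. -/
def IsBlock {V : Type*} (G : SimpleGraph V) (B : G.Subgraph) : Prop :=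
  TwoConn B.coe ∧ ∀ B' : G.Subgraph, TwoConn B'.coe → B ≤ B' → B = B'

/-- Vertex type of the theta graph with path lengths `l`: two hubs
(`Sum.inl false`, `Sum.inl true`) plus the internal vertices of each path. -/
def ThetaVert (l : List ℕ) : Type := Bool ⊕ (Σ i : Fin l.length, Fin (l.get i - 1))

/-- The theta graph `Θ_{l₁,…,l_k}`: two hubs joined by internally disjoint paths,
the `i`-th of length `l i`. -/
def thetaGraph (l : List ℕ) : SimpleGraph (ThetaVert l) :=
  SimpleGraph.fromRel (fun a b =>
    match a, b with
    | Sum.inl false, Sum.inl true => 1 ∈ l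
    | Sum.inl false, Sum.inr ⟨_, j⟩ => j.val = 0
    | Sum.inl true, Sum.inr ⟨i, j⟩ => j.val = l.get i - 2
    | Sum.inr ⟨i, j⟩, Sum.inr ⟨i', j'⟩ => i.val = i'.val ∧ j'.val = j.val + 1
    | _, _ => False)

/-- `v` (outside `c`) touches `w ∈ c`: some `v,w`-path meets `c` only at `w`. -/
def Touches {V : Type*} (G : SimpleGraph V) {u : V} (c : G.Walk u u) (v w : V) : Prop :=
  w ∈ c.support ∧ ∃ p : G.Walk v w, p.IsPath ∧ ∀ x ∈ p.support, x ∈ c.support → x = w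

/-!
Call a path from `x₁` to `x₂` of length at least two that meets `c` only at its ends an *ear*.
An ear closes up with one of the two arcs of `c` between `x₁` and `x₂` to an odd cycle sharing that
whole arc with `c`, so by `G*` this arc is the single edge `x₁x₂`. The other arc then has the even
length `|c| - 1`, and since `c` is a longest odd cycle every ear has even length. Closing two ears
with the edge `x₂x₁` gives two odd cycles that share `x₁x₂`, so two ears sharing an edge have nested
edge sets.

Fix a component `H` of `G - V(c)` and an ear `W` through it. If an edge `ty` at an interior vertex
`t` of `W` left `W`, then a path from `y` to `x₁` in `G - t`, stopped at its first vertex on `W` or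
`c` (which by the touching hypothesis is on `W`), reroutes `W` into an ear that shares an edge with
`W` but contains `ty`. So every edge at an interior vertex of `W` lies on `W`, and `H` is the
interior of `W`.
-/

namespace SimpleGraph.Walk

variable {V : Type*} {G : SimpleGraph V}

theorem exists_mem_edges_of_ne {u v : V} (p : G.Walk u v) (h : u ≠ v) : ∃ e, e ∈ p.edges :=
  List.exists_mem_of_ne_nil _ (edges_eq_nil.not.mpr (not_nil_of_ne h))

theorem two_le_length_of_mem_support {u v x : V} {p : G.Walk u v} (hx : x ∈ p.support)
    (hu : x ≠ u) (hv : x ≠ v) : 2 ≤ p.length := by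
  obtain ⟨n, rfl, hn⟩ := mem_support_iff_exists_getVert.mp hx
  have h0 : n ≠ 0 := by rintro rfl; simp at hu
  have hl : n ≠ p.length := by rintro rfl; simp at hv
  omega

theorem IsPath.start_notMem_support_tail {u v : V} {p : G.Walk u v} (hp : p.IsPath) :
    u ∉ p.support.tail := by
  have hnd := hp.support_nodup
  rw [← p.cons_tail_support, List.nodup_cons] at hnd
  exact hnd.1

theorem IsPath.append_of_support_inter {u v w : V} {p : G.Walk u v} {q : G.Walk v w}
    (hp : p.IsPath) (hq : q.IsPath) (h : ∀ x ∈ p.support, x ∈ q.support → x = v) :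
    (p.append q).IsPath := by
  rw [isPath_def, support_append, List.nodup_append]
  refine ⟨hp.support_nodup, hq.support_nodup.tail, fun x hx y hy hxy => ?_⟩
  subst hxy
  obtain rfl := h x hx (List.mem_of_mem_tail hy)
  exact hq.start_notMem_support_tail hy

theorem IsPath.eq_of_mem_support_append {u v w : V} {p : G.Walk u v} {q : G.Walk v w}
    (h : (p.append q).IsPath) {x : V} (hp : x ∈ p.support) (hq : x ∈ q.support) : x = v := by
  by_contra hxv
  exact h.ne_of_mem_support_of_append hxv hp hq rfl

theorem IsPath.append_replace {a s t b : V} {p : G.Walk a s} {q d : G.Walk s t}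
    {r : G.Walk t b} (hW : (p.append (q.append r)).IsPath) (hd : d.IsPath)
    (hdW : ∀ x ∈ d.support, x ∈ (p.append (q.append r)).support → x = s ∨ x = t) :
    (p.append (d.append r)).IsPath := by
  have hqr := hW.of_append_right
  have hsr : s ∈ r.support → s = t := hqr.eq_of_mem_support_append q.start_mem_support
  refine hW.of_append_left.append_of_support_inter
    (hd.append_of_support_inter hqr.of_append_right fun x hx hxr => ?_) fun x hx hx' => ?_
  · have hxW : x ∈ (p.append (q.append r)).support := by simp [hxr]
    rcases hdW x hx hxW with rfl | rfl
    exacts [hsr hxr, rfl]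
  · have hxqr : x ∈ (q.append r).support → x = s := hW.eq_of_mem_support_append hx
    rw [mem_support_append_iff] at hx'
    rcases hx' with hxd | hxr
    · have hxW : x ∈ (p.append (q.append r)).support := by simp [hx]
      rcases hdW x hxd hxW with rfl | rfl
      · rfl
      · exact hxqr (by simp)
    · exact hxqr (by simp [hxr])

theorem IsPath.exists_detour {a b s t : V} {W : G.Walk a b} (hW : W.IsPath)
    (hs : s ∈ W.support) (ht : t ∈ W.support) (hta : t ≠ a) (htb : t ≠ b)
    {D : G.Walk t s} (hD : D.IsPath) (hDW : ∀ x ∈ D.support, x ∈ W.support → x = s ∨ x = t) :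
    ∃ W' : G.Walk a b, W'.IsPath ∧ (∀ x ∈ W'.support, x ∈ W.support ∨ x ∈ D.support) ∧
      D.edges ⊆ W'.edges ∧ ∃ e ∈ W.edges, e ∈ W'.edges := by
  obtain ⟨W₁, W₂, -, -, rfl⟩ := hW.mem_support_iff_exists_append.mp ht
  rw [mem_support_append_iff] at hs
  rcases hs with hs | hs
  · obtain ⟨X, Y, -, -, rfl⟩ := hW.of_append_left.mem_support_iff_exists_append.mp hs
    rw [← append_assoc] at hW hDW ⊢
    obtain ⟨e, he⟩ := W₂.exists_mem_edges_of_ne htb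
    refine ⟨X.append (D.reverse.append W₂), hW.append_replace hD.reverse ?_, ?_, ?_, e, ?_, ?_⟩
    · simpa [or_comm] using hDW
    · intro x hx
      simp only [mem_support_append_iff, support_reverse, List.mem_reverse] at hx ⊢
      tauto
    · exact fun f hf => by simp [hf]
    · simp [he]
    · simp [he]
  · obtain ⟨X, Y, -, -, rfl⟩ := hW.of_append_right.mem_support_iff_exists_append.mp hs
    obtain ⟨e, he⟩ := W₁.exists_mem_edges_of_ne hta.symm
    refine ⟨W₁.append (D.append Y), hW.append_replace hD fun x hx hxW => (hDW x hx hxW).symm,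
      ?_, ?_, e, ?_, ?_⟩
    · intro x hx
      simp only [mem_support_append_iff] at hx ⊢
      tauto
    · exact fun f hf => by simp [hf]
    · simp [he]
    · simp [he]

theorem exists_append_first_mem {u v : V} (p : G.Walk u v) {S : Set V} (hv : v ∈ S) :
    ∃ s ∈ S, ∃ (q : G.Walk u s) (r : G.Walk s v), p = q.append r ∧
      ∀ x ∈ q.support, x ∈ S → x = s := by
  induction p with
  | nil => exact ⟨_, hv, nil, nil, rfl, by simp⟩
  | @cons u u' v h p ih =>
    by_cases hu : u ∈ S
    · exact ⟨u, hu, nil, cons h p, rfl, by simp⟩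
    obtain ⟨s, hs, q, r, rfl, hq⟩ := ih hv
    refine ⟨s, hs, cons h q, r, rfl, fun x hx hxS => ?_⟩
    rcases (mem_support_iff _).mp hx with rfl | hx
    · exact absurd hxS hu
    · exact hq x hx hxS

theorem end_mem_of_adj_closed {u v : V} (p : G.Walk u v) {S : Set V}
    (hS : ∀ x y, x ∈ S → G.Adj x y → y ∈ S) (hu : u ∈ S) : v ∈ S := by
  induction p with
  | nil => exact hu
  | cons h p ih => exact ih (hS _ _ hu h)

theorem mem_support_cons_concat_iff {x₁ a₁ a₂ x₂ y : V} {h₁ : G.Adj x₁ a₁}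
    {Q : G.Walk a₁ a₂} {h₂ : G.Adj a₂ x₂} :
    y ∈ (cons h₁ (Q.concat h₂)).support ↔ y = x₁ ∨ y ∈ Q.support ∨ y = x₂ := by
  simp

theorem mem_support_induce_iff {s : Set V} {u v : V} {p : G.Walk u v}
    (hp : ∀ x ∈ p.support, x ∈ s) (x : s) : x ∈ (p.induce s hp).support ↔ (x : V) ∈ p.support := by
  rw [support_induce, List.mem_attachWith]

theorem IsTrail.ncard_edges {u v : V} {p : G.Walk u v} (hp : p.IsTrail) :
    {e | e ∈ p.edges}.ncard = p.length := by
  classical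
  rw [← List.coe_toFinset, Set.ncard_coe_finset, List.toFinset_card_of_nodup hp.edges_nodup,
    length_edges]

theorem IsCycle.exists_arcs {u x₁ x₂ : V} {c : G.Walk u u} (hc : c.IsCycle)
    (h₁ : x₁ ∈ c.support) (h₂ : x₂ ∈ c.support) (hx : x₁ ≠ x₂) :
    ∃ A B : G.Walk x₁ x₂, A.IsPath ∧ B.IsPath ∧ A.length + B.length = c.length ∧
      A.support ⊆ c.support ∧ B.support ⊆ c.support ∧ A.edges ⊆ c.edges ∧ B.edges ⊆ c.edges := by
  classical
  set c' := c.rotate x₁ h₁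
  have hc' : c'.IsCycle := hc.rotate h₁
  have h₂' : x₂ ∈ c'.support := (c.mem_support_rotate_iff x₁ h₁).mpr h₂
  have hsplit : ((c'.takeUntil x₂ h₂').append (c'.dropUntil x₂ h₂')).IsCycle := by
    rwa [c'.take_spec h₂']
  have hsupp : c'.support ⊆ c.support := fun x => (c.mem_support_rotate_iff x₁ h₁).mp
  have hedges : c'.edges ⊆ c.edges := fun e => (c.rotate_edges x₁ h₁).mem_iff.mp
  refine ⟨c'.takeUntil x₂ h₂', (c'.dropUntil x₂ h₂').reverse, hc'.isPath_takeUntil h₂',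
    (hsplit.isPath_of_append_right (not_nil_of_ne hx)).reverse, ?_, ?_, ?_, ?_, ?_⟩
  · rw [length_reverse, ← length_append, c'.take_spec h₂', length_rotate]
  · exact fun x hx => hsupp (c'.support_takeUntil_subset_support h₂' hx)
  · rw [support_reverse]
    exact fun x hx => hsupp (c'.support_dropUntil_subset_support h₂' (List.mem_reverse.mp hx))
  · exact fun e he => hedges (c'.edges_takeUntil_subset_edges h₂' he)
  · rw [edges_reverse]
    exact fun e he => hedges (c'.edges_dropUntil_subset_edges h₂' (List.mem_reverse.mp he))

end SimpleGraph.Walk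

section

variable {V : Type*} {G : SimpleGraph V} {u x₁ x₂ : V} {c : G.Walk u u}

theorem InGStar.ncard_le_one (hG : InGStar G) {a b : V} {Z₁ : G.Walk a a} {Z₂ : G.Walk b b}
    (h₁ : Z₁.IsCycle) (h₂ : Z₂.IsCycle) (ho₁ : Odd Z₁.length) (ho₂ : Odd Z₂.length)
    {e₀ : Sym2 V} (he₀ : e₀ ∈ Z₁.edges) (he₀' : e₀ ∉ Z₂.edges)
    {s : Set (Sym2 V)} (hs : ∀ e ∈ s, e ∈ Z₁.edges ∧ e ∈ Z₂.edges) : s.ncard ≤ 1 := by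
  have hne : {e | e ∈ Z₁.edges} ≠ {e | e ∈ Z₂.edges} :=
    fun h => he₀' (Set.ext_iff.mp h e₀ |>.mp he₀)
  exact (Set.ncard_le_ncard hs (Z₁.edges.finite_toSet.inter_of_left _)).trans
    (hG a b Z₁ Z₂ h₁ h₂ ho₁ ho₂ hne)

theorem TwoConn.exists_return_path (h2 : TwoConn G)
    (htouch : ∀ v, v ∉ c.support → ∀ w, Touches G c v w → w = x₁ ∨ w = x₂)
    (hx₁ : x₁ ∈ c.support) (W : G.Walk x₁ x₂) {t y : V} (htc : t ∉ c.support) (hy : G.Adj t y) :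
    ∃ s ∈ W.support, ∃ D : G.Walk t s, D.IsPath ∧ s(t, y) ∈ D.edges ∧
      ∀ x ∈ D.support, x ∈ W.support ∨ x ∈ c.support → x = s ∨ x = t := by
  classical
  have htx₁ : t ≠ x₁ := fun h => htc (h ▸ hx₁)
  obtain ⟨P⟩ := (h2.2 t).preconnected ⟨y, hy.ne.symm⟩ ⟨x₁, htx₁.symm⟩
  set P' : G.Walk y x₁ := (P.map (Embedding.induce _).toHom).bypass
  have hP'path : P'.IsPath := Walk.bypass_isPath _
  have hP't : ∀ x ∈ P'.support, x ≠ t := by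
    intro x hx
    have := P.map (Embedding.induce _).toHom |>.support_bypass_subset_support hx
    simp only [Walk.support_map, List.mem_map] at this
    obtain ⟨x', -, rfl⟩ := this
    exact x'.2
  obtain ⟨s, hs, ρ, r, hP'eq, hρ⟩ := P'.exists_append_first_mem
    (S := {x | x ∈ W.support ∨ x ∈ c.support}) (Or.inl W.start_mem_support)
  have hρpath : ρ.IsPath := (hP'eq ▸ hP'path).of_append_left
  have htρ : t ∉ ρ.support := fun h => hP't t (by rw [hP'eq]; simp [h]) rfl
  have hD : ∀ x ∈ (Walk.cons hy ρ).support, x ∈ W.support ∨ x ∈ c.support → x = s ∨ x = t := by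
    intro x hx hxS
    rcases (Walk.mem_support_iff _).mp hx with rfl | hx
    · exact Or.inr rfl
    · exact Or.inl (hρ x hx hxS)
  refine ⟨s, hs.elim id fun hsc => ?_, Walk.cons hy ρ, hρpath.cons htρ, by simp, hD⟩
  have hts : Touches G c t s := ⟨hsc, Walk.cons hy ρ, hρpath.cons htρ, fun x hx hxc =>
    (hD x hx (Or.inr hxc)).resolve_right fun h => htc (h ▸ hxc)⟩
  rcases htouch t htc s hts with rfl | rfl
  · exact W.start_mem_support
  · exact W.end_mem_support

def IsEar (c : G.Walk u u) (W : G.Walk x₁ x₂) : Prop :=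
  W.IsPath ∧ 2 ≤ W.length ∧ ∀ x ∈ W.support, x ∈ c.support → x = x₁ ∨ x = x₂

namespace IsEar

variable {W : G.Walk x₁ x₂}

theorem mk_notMem_edges (hW : IsEar c W) : s(x₁, x₂) ∉ W.edges := fun h => by
  linarith [hW.1.length_eq_one_of_mem_edges h, hW.2.1]

theorem isCycle_append_reverse (hW : IsEar c W) {A : G.Walk x₁ x₂} (hA : A.IsPath)
    (hAc : A.support ⊆ c.support) : (W.append A.reverse).IsCycle := by
  refine hW.1.isCycle_append hA.reverse (fun x hxW hxA => ?_) (Or.inl hW.2.1)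
  have hxA' : x ∈ A.support := by
    simpa using List.mem_of_mem_tail hxA
  rcases hW.2.2 x (List.mem_of_mem_tail hxW) (hAc hxA') with rfl | rfl
  · exact hW.1.start_notMem_support_tail hxW
  · exact hA.reverse.start_notMem_support_tail hxA

theorem exists_mem_edges_notMem (hW : IsEar c W) : ∃ e ∈ W.edges, e ∉ c.edges := by
  have hnil : ¬ W.Nil := Walk.not_nil_iff_lt_length.mpr (by linarith [hW.2.1])
  refine ⟨s(x₁, W.snd), Walk.mk_start_snd_mem_edges hnil, fun he => ?_⟩
  rcases hW.2.2 W.snd (W.getVert_mem_support 1) (c.snd_mem_support_of_mem_edges he) with h | h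
  · exact (Walk.adj_snd hnil).ne h.symm
  · have he' := Walk.mk_start_snd_mem_edges hnil
    rw [h] at he'
    exact hW.mk_notMem_edges he'

theorem arc_length_le_one (hG : InGStar G) (hc : c.IsCycle) (hodd : Odd c.length)
    (hW : IsEar c W) {A : G.Walk x₁ x₂} (hA : A.IsPath) (hAc : A.support ⊆ c.support)
    (hAe : A.edges ⊆ c.edges) (hWA : Odd (W.length + A.length)) : A.length ≤ 1 := by
  obtain ⟨e₀, he₀W, he₀c⟩ := hW.exists_mem_edges_notMem
  rw [← hA.isTrail.ncard_edges]
  refine hG.ncard_le_one (hW.isCycle_append_reverse hA hAc) hc (by simpa using hWA) hodd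
    (by simp [he₀W]) he₀c fun e (he : e ∈ A.edges) => ⟨by simp [he], hAe he⟩

theorem exists_adj_arc (hG : InGStar G) (hc : c.IsCycle) (hodd : Odd c.length)
    (hx₁ : x₁ ∈ c.support) (hx₂ : x₂ ∈ c.support) (hx : x₁ ≠ x₂) (hW : IsEar c W) :
    G.Adj x₁ x₂ ∧ ∃ R : G.Walk x₁ x₂, R.IsPath ∧ R.support ⊆ c.support ∧
      R.length + 1 = c.length := by
  obtain ⟨A, B, hA, hB, hAB, hAc, hBc, hAe, hBe⟩ := hc.exists_arcs hx₁ hx₂ hx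
  have hA₀ := (Walk.not_nil_iff_lt_length).mp (Walk.not_nil_of_ne (p := A) hx)
  have hB₀ := (Walk.not_nil_iff_lt_length).mp (Walk.not_nil_of_ne (p := B) hx)
  rcases Nat.even_or_odd (W.length + A.length) with hWA | hWA
  · have hWB : Odd (W.length + B.length) := by
      rw [← hAB, Nat.odd_iff] at hodd
      rw [Nat.even_iff] at hWA
      rw [Nat.odd_iff]
      omega
    have := hW.arc_length_le_one hG hc hodd hB hBc hBe hWB
    exact ⟨Walk.adj_of_length_eq_one (p := B) (by omega), A, hA, hAc, by omega⟩
  · have := hW.arc_length_le_one hG hc hodd hA hAc hAe hWA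
    exact ⟨Walk.adj_of_length_eq_one (p := A) (by omega), B, hB, hBc, by omega⟩

theorem even_length (hlongest : ∀ (w : V) (c' : G.Walk w w), c'.IsCycle → Odd c'.length →
      c'.length ≤ c.length) (hodd : Odd c.length)
    {R : G.Walk x₁ x₂} (hR : R.IsPath) (hRc : R.support ⊆ c.support)
    (hRlen : R.length + 1 = c.length) (hW : IsEar c W) : Even W.length := by
  by_contra hWodd
  have hZodd : Odd (W.append R.reverse).length := by
    rw [Nat.odd_iff] at hodd ⊢
    rw [Nat.not_even_iff] at hWodd
    rw [Walk.length_append, Walk.length_reverse]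
    omega
  have hZlen := hlongest _ _ (hW.isCycle_append_reverse hR hRc) hZodd
  rw [Walk.length_append, Walk.length_reverse] at hZlen
  linarith [hW.2.1]

theorem edges_subset_of_mem_edges (hG : InGStar G) (hc : c.IsCycle) (hodd : Odd c.length)
    (hlongest : ∀ (w : V) (c' : G.Walk w w), c'.IsCycle → Odd c'.length →
      c'.length ≤ c.length)
    (hx₁ : x₁ ∈ c.support) (hx₂ : x₂ ∈ c.support) (hx : x₁ ≠ x₂) (hW : IsEar c W)
    {W' : G.Walk x₁ x₂} (hW' : IsEar c W') {e : Sym2 V} (he : e ∈ W.edges)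
    (he' : e ∈ W'.edges) : W'.edges ⊆ W.edges := by
  obtain ⟨hadj, R, hR, hRc, hRlen⟩ := hW.exists_adj_arc hG hc hodd hx₁ hx₂ hx
  have hxc : hadj.toWalk.support ⊆ c.support := by simp [hx₁, hx₂]
  have hZ : ∀ {W₀ : G.Walk x₁ x₂}, IsEar c W₀ →
      (W₀.append hadj.toWalk.reverse).IsCycle ∧ Odd (W₀.append hadj.toWalk.reverse).length :=
    fun hW₀ => ⟨hW₀.isCycle_append_reverse hadj.isPath_toWalk hxc,
      by simpa using (hW₀.even_length hlongest hodd hR hRc hRlen).add_one⟩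
  intro f hf
  by_contra hfW
  have hne : e ≠ s(x₁, x₂) := fun h => hW.mk_notMem_edges (h ▸ he)
  have hfx : f ≠ s(x₁, x₂) := ne_of_mem_of_not_mem hf hW'.mk_notMem_edges
  have := hG.ncard_le_one (hZ hW').1 (hZ hW).1 (hZ hW').2 (hZ hW).2 (e₀ := f) (by simp [hf])
    (by simpa [hfW, Sym2.eq_swap] using hfx) (s := {e, s(x₁, x₂)}) (by simp [he, he'])
  rw [Set.ncard_pair hne] at this
  omega

theorem mk_mem_edges_of_adj (h2 : TwoConn G)
    (htouch : ∀ v, v ∉ c.support → ∀ w, Touches G c v w → w = x₁ ∨ w = x₂)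
    (hx₁ : x₁ ∈ c.support) (hx₂ : x₂ ∈ c.support) (hW : IsEar c W)
    (hmax : ∀ W' : G.Walk x₁ x₂, IsEar c W' → ∀ e ∈ W.edges, e ∈ W'.edges → W'.edges ⊆ W.edges)
    {t y : V} (ht : t ∈ W.support) (htc : t ∉ c.support) (hy : G.Adj t y) :
    s(t, y) ∈ W.edges := by
  have htx₁ : t ≠ x₁ := fun h => htc (h ▸ hx₁)
  have htx₂ : t ≠ x₂ := fun h => htc (h ▸ hx₂)
  obtain ⟨s, hsW, D, hD, htyD, hDW⟩ := h2.exists_return_path htouch hx₁ W htc hy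
  obtain ⟨W', hW'path, hW'supp, hDW', e, heW, heW'⟩ :=
    hW.1.exists_detour hsW ht htx₁ htx₂ hD fun x hx hxW => hDW x hx (Or.inl hxW)
  have htyW' := hDW' htyD
  refine hmax W' ⟨hW'path, ?_, fun x hx hxc => ?_⟩ e heW heW' htyW'
  · exact Walk.two_le_length_of_mem_support (W'.fst_mem_support_of_mem_edges htyW') htx₁ htx₂
  · rcases hW'supp x hx with hxW | hxD
    · exact hW.2.2 x hxW hxc
    · rcases hDW x hxD (Or.inr hxc) with rfl | rfl
      · exact hW.2.2 x hsW hxc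
      · exact absurd hxc htc

end IsEar

theorem Touches.exists_concat {v w : V} (h : Touches G c v w) (hv : v ∉ c.support) :
    ∃ (a : V) (Q : G.Walk v a) (hQ : G.Adj a w), (Q.concat hQ).IsPath ∧
      ∀ x ∈ Q.support, x ∉ c.support := by
  obtain ⟨hw, p, hp, hpc⟩ := h
  have hnil : ¬ p.Nil := Walk.not_nil_of_ne fun h => hv (h ▸ hw)
  have hp' : (p.dropLast.concat (Walk.adj_penultimate hnil)).IsPath := by
    rwa [Walk.concat_dropLast]
  refine ⟨_, p.dropLast, Walk.adj_penultimate hnil, hp', fun x hx hxc => ?_⟩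
  have hxp : x ∈ p.support := by
    rw [← Walk.concat_dropLast (Walk.adj_penultimate hnil)]
    exact Walk.support_subset_support_concat _ _ hx
  exact ((Walk.concat_isPath_iff _).mp hp').2 (hpc x hxp hxc ▸ hx)

theorem exists_ear_of_touches
    (htouch : ∀ v, v ∉ c.support → Touches G c v x₁ ∧ Touches G c v x₂) (hx : x₁ ≠ x₂)
    {r : V} (hr : r ∉ c.support) :
    ∃ (a₁ a₂ : V) (h₁ : G.Adj x₁ a₁) (Q : G.Walk a₁ a₂) (h₂ : G.Adj a₂ x₂),
      IsEar c (Walk.cons h₁ (Q.concat h₂)) ∧ (∀ x ∈ Q.support, x ∉ c.support) ∧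
      ∃ Q₁ : G.Walk r a₁, ∀ x ∈ Q₁.support, x ∉ c.support := by
  obtain ⟨a₁, Q₁, h₁, -, hQ₁⟩ := (htouch r hr).1.exists_concat hr
  have ha₁ : a₁ ∉ c.support := hQ₁ a₁ Q₁.end_mem_support
  obtain ⟨a₂, Q, h₂, hQ, hQc⟩ := (htouch a₁ ha₁).2.exists_concat ha₁
  have hx₁ : x₁ ∈ c.support := (htouch r hr).1.1
  refine ⟨a₁, a₂, h₁.symm, Q, h₂, ⟨hQ.cons ?_, by simp, fun x hxW hxc => ?_⟩, hQc, Q₁, hQ₁⟩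
  · simpa using ⟨fun h => hQc x₁ h hx₁, hx⟩
  · rcases Walk.mem_support_cons_concat_iff.mp hxW with h | h | h
    · exact Or.inl h
    · exact absurd hxc (hQc x h)
    · exact Or.inr h

theorem mem_supp_iff_mem_support_of_forall_adj {a₁ a₂ : V} {h₁ : G.Adj x₁ a₁}
    {Q : G.Walk a₁ a₂} {h₂ : G.Adj a₂ x₂} (hQc : ∀ x ∈ Q.support, x ∉ c.support)
    (hx₁ : x₁ ∈ c.support) (hx₂ : x₂ ∈ c.support)
    (hedge : ∀ t ∈ Q.support, ∀ y, G.Adj t y → s(t, y) ∈ (Walk.cons h₁ (Q.concat h₂)).edges)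
    (x : {v | v ∉ c.support}) :
    x ∈ ((G.induce {v | v ∉ c.support}).connectedComponentMk
      ⟨a₁, hQc a₁ Q.start_mem_support⟩).supp ↔ (x : V) ∈ Q.support := by
  classical
  rw [ConnectedComponent.mem_supp_iff, ConnectedComponent.eq]
  constructor
  · rintro ⟨p⟩
    refine p.reverse.end_mem_of_adj_closed (S := {z | (z : V) ∈ Q.support})
      (fun z y hz hzy => ?_) Q.start_mem_support
    rcases Walk.mem_support_cons_concat_iff.mp
      (Walk.snd_mem_support_of_mem_edges _ (hedge z hz y hzy)) with h | h | h
    · exact absurd (h ▸ hx₁) y.2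
    · exact h
    · exact absurd (h ▸ hx₂) y.2
  · intro hx
    have hxQ := (Walk.mem_support_induce_iff hQc x).mpr hx
    exact ⟨((Q.induce {v | v ∉ c.support} hQc).takeUntil x hxQ).reverse⟩

theorem exists_isPath_supp_of_forall_adj_mem_edges {a₁ a₂ : V} {h₁ : G.Adj x₁ a₁}
    {Q : G.Walk a₁ a₂} {h₂ : G.Adj a₂ x₂} (hW : (Walk.cons h₁ (Q.concat h₂)).IsPath)
    (hQc : ∀ x ∈ Q.support, x ∉ c.support) (hx₁ : x₁ ∈ c.support) (hx₂ : x₂ ∈ c.support)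
    (hedge : ∀ t ∈ Q.support, ∀ y, G.Adj t y → s(t, y) ∈ (Walk.cons h₁ (Q.concat h₂)).edges) :
    let K := (G.induce {v | v ∉ c.support}).connectedComponentMk ⟨a₁, hQc a₁ Q.start_mem_support⟩
    ∃ (v₁ v₂ : {v | v ∉ c.support}) (p : (G.induce {v | v ∉ c.support}).Walk v₁ v₂),
      p.IsPath ∧ (∀ x : {v | v ∉ c.support}, x ∈ K.supp ↔ x ∈ p.support) ∧
      G.Adj x₁ ↑v₁ ∧ G.Adj x₂ ↑v₂ ∧
      (∀ x ∈ K.supp, G.Adj x₁ ↑x → x = v₁) ∧ (∀ x ∈ K.supp, G.Adj x₂ ↑x → x = v₂) ∧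
      (∀ x ∈ p.support, x ≠ v₁ → x ≠ v₂ → ∀ y : V, G.Adj ↑x y → ∃ z ∈ p.support, ↑z = y) := by
  intro K
  have hsupp := mem_supp_iff_mem_support_of_forall_adj hQc hx₁ hx₂ hedge
  have hmem := Walk.mem_support_induce_iff (s := {v | v ∉ c.support}) hQc
  have huniq₁ : ∀ x ∈ Q.support, G.Adj x₁ x → x = a₁ := fun x hx hadj => by
    simpa using hW.eq_snd_of_mem_edges (Sym2.eq_swap ▸ hedge x hx x₁ hadj.symm)
  have huniq₂ : ∀ x ∈ Q.support, G.Adj x₂ x → x = a₂ := fun x hx hadj => by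
    have := hW.eq_penultimate_of_mem_edges (Sym2.eq_swap ▸ hedge x hx x₂ hadj.symm)
    rwa [← Walk.concat_cons, Walk.penultimate_concat] at this
  refine ⟨_, _, Q.induce {v | v ∉ c.support} hQc, ?_, fun x => by rw [hsupp, hmem], h₁, h₂.symm,
    fun x hx hadj => Subtype.ext (huniq₁ x ((hsupp x).mp hx) hadj),
    fun x hx hadj => Subtype.ext (huniq₂ x ((hsupp x).mp hx) hadj),
    fun x hx hne₁ hne₂ y hy => ?_⟩
  · exact Walk.IsPath.of_map (f := (Embedding.induce _).toHom)
      (by rw [Walk.map_induce]; exact ((Walk.concat_isPath_iff h₂).mp hW.of_cons).1)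
  · have hxQ := (hmem x).mp hx
    rcases Walk.mem_support_cons_concat_iff.mp
      (Walk.snd_mem_support_of_mem_edges _ (hedge x hxQ y hy)) with rfl | hyQ | rfl
    · exact absurd (Subtype.ext (huniq₁ x hxQ hy.symm)) hne₁
    · exact ⟨⟨y, hQc y hyQ⟩, (hmem _).mpr hyQ, rfl⟩
    · exact absurd (Subtype.ext (huniq₂ x hxQ hy.symm)) hne₂

end

theorem stmt19_general {V : Type*} (G : SimpleGraph V) (hG : InGStar G) (h2 : TwoConn G)
    (u : V) (c : G.Walk u u) (hc : c.IsCycle) (hodd : Odd c.length)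
    (hlongest : ∀ (w : V) (c' : G.Walk w w), c'.IsCycle → Odd c'.length →
      c'.length ≤ c.length)
    (x₁ x₂ : V) (hx : x₁ ≠ x₂)
    (htouch : ∀ v : V, v ∉ c.support → ∀ w : V,
      Touches G c v w ↔ (w = x₁ ∨ w = x₂)) :
    ∀ K : (G.induce {v | v ∉ c.support}).ConnectedComponent,
      ∃ (v₁ v₂ : {v | v ∉ c.support})
        (p : (G.induce {v | v ∉ c.support}).Walk v₁ v₂),
        p.IsPath ∧
        (∀ x : {v | v ∉ c.support}, x ∈ K.supp ↔ x ∈ p.support) ∧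
        G.Adj x₁ ↑v₁ ∧ G.Adj x₂ ↑v₂ ∧
        (∀ x ∈ K.supp, G.Adj x₁ ↑x → x = v₁) ∧
        (∀ x ∈ K.supp, G.Adj x₂ ↑x → x = v₂) ∧
        (∀ x ∈ p.support, x ≠ v₁ → x ≠ v₂ →
          ∀ y : V, G.Adj ↑x y → ∃ z ∈ p.support, ↑z = y) := by
  refine ConnectedComponent.ind fun r => ?_
  have htouches : ∀ v, v ∉ c.support → Touches G c v x₁ ∧ Touches G c v x₂ :=
    fun v hv => ⟨(htouch v hv x₁).mpr (Or.inl rfl), (htouch v hv x₂).mpr (Or.inr rfl)⟩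
  have hx₁ : x₁ ∈ c.support := (htouches r r.2).1.1
  have hx₂ : x₂ ∈ c.support := (htouches r r.2).2.1
  obtain ⟨a₁, a₂, h₁, Q, h₂, hW, hQc, Q₁, hQ₁⟩ := exists_ear_of_touches htouches hx r.2
  have hmax : ∀ W' : G.Walk x₁ x₂, IsEar c W' →
      ∀ e ∈ (Walk.cons h₁ (Q.concat h₂)).edges, e ∈ W'.edges →
        W'.edges ⊆ (Walk.cons h₁ (Q.concat h₂)).edges :=
    fun _ hW' _ he he' => hW.edges_subset_of_mem_edges hG hc hodd hlongest hx₁ hx₂ hx hW' he he'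
  have hedge : ∀ t ∈ Q.support, ∀ y, G.Adj t y → s(t, y) ∈ (Walk.cons h₁ (Q.concat h₂)).edges :=
    fun t ht y hy => hW.mk_mem_edges_of_adj h2 (fun v hv w => (htouch v hv w).mp) hx₁ hx₂ hmax
      (Walk.mem_support_cons_concat_iff.mpr (Or.inr (Or.inl ht))) (hQc t ht) hy
  rw [ConnectedComponent.sound ⟨Q₁.induce {v | v ∉ c.support} hQ₁⟩]
  exact exists_isPath_supp_of_forall_adj_mem_edges hW.1 hQc hx₁ hx₂ hedge

/-- let `c` be a longest odd cycle (length ≥ 5) of a 2-connected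
`G ∈ G*` and `{x₁,x₂}` the common touching set of all vertices outside `c`.
Then every connected component of `G − V(c)` is a path whose endpoints are the
unique neighbors of `x₁` and `x₂` in the component, and whose internal vertices
have all their `G`-neighbors on the path. -/
theorem stmt19 {V : Type*} (G : SimpleGraph V) (hG : InGStar G) (h2 : TwoConn G)
    (u : V) (c : G.Walk u u) (hc : c.IsCycle) (hodd : Odd c.length)
    (hlongest : ∀ (w : V) (c' : G.Walk w w), c'.IsCycle → Odd c'.length →
      c'.length ≤ c.length)
    (hlen : 5 ≤ c.length) (x₁ x₂ : V) (hx : x₁ ≠ x₂)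
    (htouch : ∀ v : V, v ∉ c.support → ∀ w : V,
      Touches G c v w ↔ (w = x₁ ∨ w = x₂)) :
    ∀ K : (G.induce {v | v ∉ c.support}).ConnectedComponent,
      ∃ (v₁ v₂ : {v | v ∉ c.support})
        (p : (G.induce {v | v ∉ c.support}).Walk v₁ v₂),
        p.IsPath ∧
        (∀ x : {v | v ∉ c.support}, x ∈ K.supp ↔ x ∈ p.support) ∧
        G.Adj x₁ ↑v₁ ∧ G.Adj x₂ ↑v₂ ∧
        (∀ x ∈ K.supp, G.Adj x₁ ↑x → x = v₁) ∧
        (∀ x ∈ K.supp, G.Adj x₂ ↑x → x = v₂) ∧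
        (∀ x ∈ p.support, x ≠ v₁ → x ≠ v₂ →
          ∀ y : V, G.Adj ↑x y → ∃ z ∈ p.support, ↑z = y) :=
  stmt19_general G hG h2 u c hc hodd hlongest x₁ x₂ hx htouch
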